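/- In a flat uniform evidence model, for every world w there exists a ≼_ℰ-maximal v with w ≼_ℰ v, where ≼_ℰ is the derived plausibility order. -/

import Mathlib

def FIP {W : Type*} (𝒳 : Set (Set W)) : Prop :=
  ∀ 𝒴 ⊆ 𝒳, 𝒴.Finite → (⋂₀ 𝒴).Nonempty

def UScenario {W : Type*} (ℰ : Set (Set W)) (𝒳 : Set (Set W)) : Prop :=
  𝒳 ⊆ ℰ ∧ FIP 𝒳 ∧ ∀ 𝒴, 𝒳 ⊆ 𝒴 → 𝒴 ⊆ ℰ → FIP 𝒴 → 𝒴 = 𝒳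

def USpecLE {W : Type*} (ℰ : Set (Set W)) (w v : W) : Prop :=
  ∀ X ∈ ℰ, w ∈ X → v ∈ X


/-! The families of evidence sets through `w` have the finite intersection property, so by Zorn's
lemma they extend to a scenario `𝒳`, a maximal such family, and flatness gives a point `v` of
`⋂₀ 𝒳`. Every evidence set through `w` lies in `𝒳`, so `w ≼ v`. If `v ≼ u`, then `u` lies in
every member of `𝒳`, so adding any evidence set through `u` to `𝒳` keeps the finite intersection
property; by maximality it already belongs to `𝒳`, hence contains `v`, and `u ≼ v`. -/

section

variable {W : Type*}

theorem FIP.of_mem_sInter {𝒳 : Set (Set W)} {u : W} (hu : u ∈ ⋂₀ 𝒳) : FIP 𝒳 :=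
  fun _ h𝒴 _ => ⟨u, Set.sInter_mono h𝒴 hu⟩

theorem FIP.sUnion_of_isChain {c : Set (Set (Set W))} (hfip : ∀ 𝒳 ∈ c, FIP 𝒳)
    (hchain : IsChain (· ⊆ ·) c) (hne : c.Nonempty) : FIP (⋃₀ c) := by
  intro 𝒴 h𝒴 hfin
  obtain ⟨𝒳, h𝒳, h𝒴𝒳⟩ :=
    hchain.directedOn.exists_mem_subset_of_finite_of_subset_sUnion hne hfin h𝒴
  exact hfip 𝒳 h𝒳 𝒴 h𝒴𝒳 hfin

theorem uScenario_of_maximal {ℰ 𝒳 : Set (Set W)} (h : Maximal (fun 𝒴 => 𝒴 ⊆ ℰ ∧ FIP 𝒴) 𝒳) :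
    UScenario ℰ 𝒳 :=
  ⟨h.prop.1, h.prop.2, fun _ h𝒳𝒴 h𝒴ℰ h𝒴 => (h.eq_of_subset ⟨h𝒴ℰ, h𝒴⟩ h𝒳𝒴).symm⟩

theorem exists_uScenario_superset {ℰ 𝒳₀ : Set (Set W)} (hℰ : 𝒳₀ ⊆ ℰ) (h𝒳₀ : FIP 𝒳₀) :
    ∃ 𝒳, 𝒳₀ ⊆ 𝒳 ∧ UScenario ℰ 𝒳 := by
  obtain ⟨𝒳, h𝒳₀𝒳, h𝒳⟩ := zorn_subset_nonempty {𝒴 | 𝒴 ⊆ ℰ ∧ FIP 𝒴}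
    (fun c hc hchain hne => ⟨⋃₀ c,
      ⟨Set.sUnion_subset fun 𝒴 h𝒴 => (hc h𝒴).1,
        FIP.sUnion_of_isChain (fun 𝒴 h𝒴 => (hc h𝒴).2) hchain hne⟩,
      fun _ => Set.subset_sUnion_of_mem⟩)
    𝒳₀ ⟨hℰ, h𝒳₀⟩
  exact ⟨𝒳, h𝒳₀𝒳, uScenario_of_maximal h𝒳⟩

theorem UScenario.mem_of_mem_sInter {ℰ 𝒳 : Set (Set W)} (h𝒳 : UScenario ℰ 𝒳) {u : W}
    (hu : u ∈ ⋂₀ 𝒳) {X : Set W} (hX : X ∈ ℰ) (huX : u ∈ X) : X ∈ 𝒳 := by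
  have hfip : FIP (insert X 𝒳) :=
    FIP.of_mem_sInter (by rw [Set.sInter_insert]; exact ⟨huX, hu⟩)
  rw [← h𝒳.2.2 _ (Set.subset_insert X 𝒳) (Set.insert_subset hX h𝒳.1) hfip]
  exact Set.mem_insert X 𝒳

end

theorem stmt_8_general {W : Type*} (ℰ : Set (Set W))
    (hflat : ∀ 𝒳, UScenario ℰ 𝒳 → (⋂₀ 𝒳).Nonempty)
    (w : W) :
    ∃ v, USpecLE ℰ w v ∧ ∀ u, USpecLE ℰ v u → USpecLE ℰ u v := by
  obtain ⟨𝒳, hw𝒳, h𝒳⟩ := exists_uScenario_superset (𝒳₀ := {X | X ∈ ℰ ∧ w ∈ X})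
    (fun _ hX => hX.1) (FIP.of_mem_sInter fun _ hX => hX.2)
  obtain ⟨v, hv⟩ := hflat 𝒳 h𝒳
  refine ⟨v, fun X hX hwX => hv X (hw𝒳 ⟨hX, hwX⟩), fun u hvu X hX huX => ?_⟩
  have hu : u ∈ ⋂₀ 𝒳 := fun Y hY => hvu Y (h𝒳.1 hY) (hv Y hY)
  exact hv X (h𝒳.mem_of_mem_sInter hu hX huX)

theorem stmt_8 {W : Type*} (ℰ : Set (Set W))
    (hne : ∅ ∉ ℰ) (huniv : Set.univ ∈ ℰ)
    (hflat : ∀ 𝒳, UScenario ℰ 𝒳 → (⋂₀ 𝒳).Nonempty)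
    (w : W) :
    ∃ v, USpecLE ℰ w v ∧ ∀ u, USpecLE ℰ v u → USpecLE ℰ u v :=
  stmt_8_general ℰ hflat w
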